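/- arXiv:1901.05925 — 3 statements merged into one kernel-verified Lean document; each statement's English description precedes it below -/
import Mathlib

section
/- Let G = (V, E) be a finite simple graph with edge weights p : E → ℝ≥0, and let k be a natural number. Define g : 2^V → ℝ≥0 by g(S) = max { Σ_{e ∈ F} p(e) : F ⊆ edges(S), |F| ≤ k }. Then g is submodular: for all S ⊆ Q ⊆ V and all v ∈ V \ Q, g(S ∪ {v}) - g(S) ≥ g(Q ∪ {v}) - g(Q). -/
/-!
An optimal `k`-set `X` for `E(A) ∪ E(B)` and an optimal `k`-set `Y` for `E(A) ∩ E(B)` can be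
redistributed into a `k`-subset of `E(A)` and a `k`-subset of `E(B)` of the same total weight, so
`F ↦ max {∑ e ∈ F', p e : F' ⊆ F, |F'| ≤ k}` is submodular on edge sets. Composing it with `S ↦ edgesOf G S`, which preserves unions and is
monotone, keeps submodularity, and the diminishing-returns form follows by taking `A = S ∪ {v}`, `B = Q`.
-/

open Finset
open scoped Classical

variable {V : Type*} [Fintype V] [DecidableEq V]

/-- The set of edges of `G` incident to at least one vertex of `S`. -/
def edgesOf (G : SimpleGraph V) [DecidableRel G.Adj] (S : Finset V) : Finset (Sym2 V) :=
  G.edgeFinset.filter (fun e => ∃ v ∈ S, v ∈ e)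

/-- `gSum G p k S` is the maximum of `∑ e ∈ F, p e` over `F ⊆ edgesOf G S` with `|F| ≤ k`. -/
noncomputable def gSum (G : SimpleGraph V) [DecidableRel G.Adj] (p : Sym2 V → ℝ) (k : ℕ)
    (S : Finset V) : ℝ :=
  ((edgesOf G S).powerset.filter (fun F => F.card ≤ k)).sup' ⟨∅, by simp⟩
    (fun F => ∑ e ∈ F, p e)

section MaxWeight

variable {α : Type*}

noncomputable def maxWeight (p : α → ℝ) (k : ℕ) (A : Finset α) : ℝ :=
  (A.powerset.filter (fun F => #F ≤ k)).sup' ⟨∅, by simp⟩ (fun F => ∑ e ∈ F, p e)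

variable {p : α → ℝ} {k : ℕ}

theorem sum_le_maxWeight {A F : Finset α} (hFA : F ⊆ A) (hFk : #F ≤ k) :
    ∑ e ∈ F, p e ≤ maxWeight p k A :=
  le_sup' (fun F => ∑ e ∈ F, p e) (mem_filter.mpr ⟨mem_powerset.mpr hFA, hFk⟩)

theorem exists_maxWeight_eq (p : α → ℝ) (k : ℕ) (A : Finset α) :
    ∃ F ⊆ A, #F ≤ k ∧ maxWeight p k A = ∑ e ∈ F, p e := by
  obtain ⟨F, hF, hmax⟩ := exists_mem_eq_sup' (⟨∅, by simp⟩ : (A.powerset.filter (#· ≤ k)).Nonempty)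
    (fun F => ∑ e ∈ F, p e)
  rw [mem_filter, mem_powerset] at hF
  exact ⟨F, hF.1, hF.2, hmax⟩

theorem maxWeight_mono {A B : Finset α} (hAB : A ⊆ B) : maxWeight p k A ≤ maxWeight p k B :=
  sup'_le _ _ fun _ hF =>
    sum_le_maxWeight ((mem_powerset.mp (mem_filter.mp hF).1).trans hAB) (mem_filter.mp hF).2

theorem maxWeight_union_add_maxWeight_inter_le [DecidableEq α] (p : α → ℝ) (k : ℕ)
    (A B : Finset α) :
    maxWeight p k (A ∪ B) + maxWeight p k (A ∩ B) ≤ maxWeight p k A + maxWeight p k B := by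
  obtain ⟨X, hXAB, hXk, hX⟩ := exists_maxWeight_eq p k (A ∪ B)
  obtain ⟨Y, hYAB, hYk, hY⟩ := exists_maxWeight_eq p k (A ∩ B)
  have hYA : Y ⊆ A := hYAB.trans inter_subset_left
  have hYB : Y ⊆ B := hYAB.trans inter_subset_right
  -- `A` gets `X ∩ A` topped up to size `k` by a part `D` of `Y \ X`; `B` gets `X \ A` and `Y \ D`.
  -- If all of `Y \ X` fits, `B`'s part is no larger than `X` (as `Y ∩ X ⊆ X ∩ A`); otherwise it
  -- has `#X + #Y - k ≤ k` elements.
  obtain ⟨D, hDYX, hD⟩ := exists_subset_card_eq (min_le_left #(Y \ X) (k - #(X ∩ A)))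
  have hDY : D ⊆ Y := hDYX.trans sdiff_subset
  have hX_card : #(X ∩ A) + #(X \ A) = #X := card_inter_add_card_sdiff X A
  have hY_card : #(Y ∩ X) + #(Y \ X) = #Y := card_inter_add_card_sdiff Y X
  have hYX_le : #(Y ∩ X) ≤ #(X ∩ A) :=
    card_le_card fun e he => mem_inter.mpr ⟨(mem_inter.mp he).2, hYA (mem_inter.mp he).1⟩
  have hA : ∑ e ∈ X ∩ A ∪ D, p e ≤ maxWeight p k A := by
    refine sum_le_maxWeight (union_subset inter_subset_right (hDY.trans hYA)) ?_
    calc #(X ∩ A ∪ D) ≤ #(X ∩ A) + #D := card_union_le _ _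
      _ ≤ k := by omega
  have hB : ∑ e ∈ X \ A ∪ (Y \ D), p e ≤ maxWeight p k B := by
    refine sum_le_maxWeight (union_subset (sdiff_le_iff.mpr hXAB) (sdiff_subset.trans hYB)) ?_
    calc #(X \ A ∪ (Y \ D)) ≤ #(X \ A) + #(Y \ D) := card_union_le _ _
      _ = #(X \ A) + (#Y - #D) := by rw [card_sdiff_of_subset hDY]
      _ ≤ k := by omega
  have hsum : ∑ e ∈ X ∩ A ∪ D, p e + ∑ e ∈ X \ A ∪ (Y \ D), p e =
      ∑ e ∈ X, p e + ∑ e ∈ Y, p e := by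
    rw [sum_union ((disjoint_sdiff.mono_right hDYX).mono_left inter_subset_left),
      sum_union (sdiff_disjoint.mono_right (sdiff_subset.trans hYA)),
      ← sum_inter_add_sum_sdiff X A p, ← sum_sdiff hDY]
    ring
  linarith

end MaxWeight

section EdgesOf

variable (G : SimpleGraph V) [DecidableRel G.Adj]

theorem edgesOf_mono {S T : Finset V} (hST : S ⊆ T) : edgesOf G S ⊆ edgesOf G T :=
  monotone_filter_right _ fun _ _ ⟨v, hv, hve⟩ => ⟨v, hST hv, hve⟩

theorem edgesOf_union (S T : Finset V) : edgesOf G (S ∪ T) = edgesOf G S ∪ edgesOf G T := by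
  simp only [edgesOf, ← filter_or, mem_union, or_and_right, exists_or]

theorem gSum_eq_maxWeight (p : Sym2 V → ℝ) (k : ℕ) (S : Finset V) :
    gSum G p k S = maxWeight p k (edgesOf G S) :=
  rfl

theorem gSum_union_add_gSum_inter_le (p : Sym2 V → ℝ) (k : ℕ) (S T : Finset V) :
    gSum G p k (S ∪ T) + gSum G p k (S ∩ T) ≤ gSum G p k S + gSum G p k T := by
  have hinter : edgesOf G (S ∩ T) ⊆ edgesOf G S ∩ edgesOf G T :=
    subset_inter (edgesOf_mono G inter_subset_left) (edgesOf_mono G inter_subset_right)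
  simp only [gSum_eq_maxWeight, edgesOf_union]
  linarith [maxWeight_mono (p := p) (k := k) hinter,
    maxWeight_union_add_maxWeight_inter_le p k (edgesOf G S) (edgesOf G T)]

end EdgesOf

theorem stmt_3_general (G : SimpleGraph V) [DecidableRel G.Adj] (p : Sym2 V → ℝ)
    (k : ℕ) (S Q : Finset V) (hSQ : S ⊆ Q) (v : V) (hv : v ∉ Q) :
    gSum G p k (insert v S) - gSum G p k S ≥ gSum G p k (insert v Q) - gSum G p k Q := by
  have hunion : insert v S ∪ Q = insert v Q := by rw [insert_union, union_eq_right.mpr hSQ]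
  have hinter : insert v S ∩ Q = S := by rw [insert_inter_of_notMem hv, inter_eq_left.mpr hSQ]
  have := gSum_union_add_gSum_inter_le G p k (insert v S) Q
  rw [hunion, hinter] at this
  linarith

/-- `g` is submodular (diminishing returns form). -/
theorem stmt_3 (G : SimpleGraph V) [DecidableRel G.Adj] (p : Sym2 V → ℝ)
    (hp : ∀ e, 0 ≤ p e) (k : ℕ) (S Q : Finset V) (hSQ : S ⊆ Q) (v : V) (hv : v ∉ Q) :
    gSum G p k (insert v S) - gSum G p k S ≥ gSum G p k (insert v Q) - gSum G p k Q :=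
  stmt_3_general G p k S Q hSQ v hv
end

section
/- Let W be a finite set, f : 2^W → ℝ≥0 be normalized, monotone, and submodular, and let k ≥ 1 and t ≤ k be natural numbers. Let A_t be the set produced by t iterations of the greedy algorithm that, starting from ∅, at each step adds an element maximizing the marginal gain of f. Then f(A_t) ≥ (1 - exp(-t/k)) · max { f(B) : B ⊆ W, |B| ≤ k }. -/
/-!
If `B` is a set of at most `k` elements, submodularity bounds the gain of adding all of `B` to
the current greedy set `S` by the sum of the single-element gains, hence by `k` times the greedy
gain. So each greedy step closes at least a `1/k` fraction of the gap `f B - f S`, the gap after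
`t` steps is at most `(1 - 1/k)^t f B ≤ exp(-t/k) f B`, and taking `B` optimal gives the bound.
-/

open Finset

namespace Submodular

variable {W : Type*} [DecidableEq W] {f : Finset W → ℝ}

theorem marginal_le_of_subset
    (hsub : ∀ A B : Finset W, f A + f B ≥ f (A ∪ B) + f (A ∩ B))
    {S T : Finset W} (hST : S ⊆ T) {a : W} (ha : a ∉ T) :
    f (insert a T) - f T ≤ f (insert a S) - f S := by
  have hunion : insert a S ∪ T = insert a T := by
    rw [insert_union, union_eq_right.2 hST]
  have hinter : insert a S ∩ T = S := by
    rw [insert_inter_of_notMem ha, inter_eq_left.2 hST]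
  have := hsub (insert a S) T
  rw [hunion, hinter] at this
  linarith

theorem le_add_sum_marginal (hmono : Monotone f)
    (hsub : ∀ A B : Finset W, f A + f B ≥ f (A ∪ B) + f (A ∩ B)) (S B : Finset W) :
    f (S ∪ B) ≤ f S + ∑ b ∈ B, (f (insert b S) - f S) := by
  induction B using Finset.induction_on with
  | empty => simp
  | insert b B hb ih =>
    rw [sum_insert hb, union_insert]
    by_cases hbSB : b ∈ S ∪ B
    · rw [insert_eq_self.2 hbSB]
      linarith [hmono (subset_insert b S)]
    · linarith [marginal_le_of_subset hsub ((subset_union_left : S ⊆ S ∪ B)) hbSB]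

theorem sub_le_card_mul_greedy_gain (hmono : Monotone f)
    (hsub : ∀ A B : Finset W, f A + f B ≥ f (A ∪ B) + f (A ∩ B))
    {S B : Finset W} {a : W} (hgreedy : ∀ a' ∉ S, f (insert a' S) ≤ f (insert a S)) :
    f B - f S ≤ #B * (f (insert a S) - f S) := by
  have hgain : 0 ≤ f (insert a S) - f S := sub_nonneg.2 (hmono (subset_insert a S))
  have hle : ∀ b ∈ B, f (insert b S) - f S ≤ f (insert a S) - f S := by
    intro b _
    by_cases hbS : b ∈ S
    · rw [insert_eq_self.2 hbS, sub_self]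
      exact hgain
    · linarith [hgreedy b hbS]
  calc f B - f S ≤ f (S ∪ B) - f S := by linarith [hmono ((subset_union_right : B ⊆ S ∪ B))]
    _ ≤ ∑ b ∈ B, (f (insert b S) - f S) := by linarith [le_add_sum_marginal hmono hsub S B]
    _ ≤ #B * (f (insert a S) - f S) := by simpa using sum_le_card_nsmul B _ _ hle

theorem greedy_gap_le (hmono : Monotone f)
    (hsub : ∀ A B : Finset W, f A + f B ≥ f (A ∪ B) + f (A ∩ B))
    {S B : Finset W} {k : ℕ} (hB : #B ≤ k) {a : W}
    (hgreedy : ∀ a' ∉ S, f (insert a' S) ≤ f (insert a S)) :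
    f B - f (insert a S) ≤ (1 - 1 / k) * (f B - f S) := by
  have hgain : 0 ≤ f (insert a S) - f S := sub_nonneg.2 (hmono (subset_insert a S))
  have hcard := sub_le_card_mul_greedy_gain hmono hsub (B := B) hgreedy
  have hfrac : (f B - f S) / k ≤ f (insert a S) - f S := by
    rcases Nat.eq_zero_or_pos k with rfl | hk
    · simpa using hgain
    · rw [div_le_iff₀ (by exact_mod_cast hk), mul_comm]
      exact hcard.trans (mul_le_mul_of_nonneg_right (by exact_mod_cast hB) hgain)
  linarith [show (1 - 1 / (k : ℝ)) * (f B - f S) = f B - f S - (f B - f S) / k by ring]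

end Submodular

theorem one_sub_one_div_natCast_nonneg (k : ℕ) : 0 ≤ 1 - 1 / (k : ℝ) := by
  rcases Nat.eq_zero_or_pos k with rfl | hk
  · simp
  · rw [sub_nonneg, div_le_one (by exact_mod_cast hk)]
    exact_mod_cast hk

theorem one_sub_one_div_natCast_pow_le_exp (k t : ℕ) :
    (1 - 1 / (k : ℝ)) ^ t ≤ Real.exp (-(t : ℝ) / k) := by
  calc (1 - 1 / (k : ℝ)) ^ t ≤ Real.exp (-(1 / k)) ^ t :=
        pow_le_pow_left₀ (one_sub_one_div_natCast_nonneg k)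
          (by linarith [Real.add_one_le_exp (-(1 / (k : ℝ)))]) t
    _ = Real.exp (-(t : ℝ) / k) := by
        rw [← Real.exp_nat_mul]
        ring_nf

open Submodular in
/-- `t ≤ k` steps of the greedy algorithm for a normalized monotone
submodular function achieve a `1 - exp(-t/k)` fraction of the optimum over sets of
cardinality at most `k`. -/
theorem stmt_10 {W : Type*} [Fintype W] [DecidableEq W] (f : Finset W → ℝ)
    (hnorm : f ∅ = 0)
    (hmono : ∀ A B : Finset W, A ⊆ B → f A ≤ f B)
    (hsub : ∀ A B : Finset W, f A + f B ≥ f (A ∪ B) + f (A ∩ B))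
    (k t : ℕ)
    (A : ℕ → Finset W) (hA0 : A 0 = ∅)
    (hstep : ∀ i < t, ∃ a ∉ A i, A (i + 1) = insert a (A i) ∧
      ∀ a' ∉ A i, f (insert a' (A i)) ≤ f (insert a (A i))) :
    f (A t) ≥ (1 - Real.exp (-(t : ℝ) / k)) *
      ((Finset.univ.powerset.filter (fun B : Finset W => B.card ≤ k)).sup' ⟨∅, by simp⟩ f) := by
  have hmono' : Monotone f := fun A B h => hmono A B h
  obtain ⟨B, hB, hopt⟩ :=
    exists_mem_eq_sup' (s := univ.powerset.filter fun B : Finset W => #B ≤ k) ⟨∅, by simp⟩ f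
  rw [hopt]
  have hBk : #B ≤ k := (mem_filter.1 hB).2
  have hgap : ∀ i ≤ t, f B - f (A i) ≤ (1 - 1 / k) ^ i * f B := by
    intro i hi
    induction i with
    | zero => simp [hA0, hnorm]
    | succ i ih =>
      obtain ⟨a, -, hA, hgreedy⟩ := hstep i hi
      rw [hA, pow_succ', mul_assoc]
      exact (greedy_gap_le hmono' hsub hBk hgreedy).trans
        (mul_le_mul_of_nonneg_left (ih (by omega)) (one_sub_one_div_natCast_nonneg k))
  have hB0 : 0 ≤ f B := hnorm ▸ hmono' (empty_subset B)
  linarith [hgap t le_rfl,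
    mul_le_mul_of_nonneg_right (one_sub_one_div_natCast_pow_le_exp k t) hB0]
end

section
/- Let W be a finite set and f : 2^W → ℝ≥0 be normalized, monotone, and submodular. Let A_k be the output of k steps of the greedy algorithm. Then f(A_k) ≥ (1 - 1/e) · max { f(B) : B ⊆ W, |B| ≤ k }. -/
open Finset

lemma submod_telescope {W : Type*} [DecidableEq W] (f : Finset W → ℝ)
    (hmono : ∀ A B : Finset W, A ⊆ B → f A ≤ f B)
    (hsub : ∀ A B : Finset W, f A + f B ≥ f (A ∪ B) + f (A ∩ B))
    (S T : Finset W) :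
    f (S ∪ T) ≤ f S + ∑ t ∈ T \ S, (f (insert t S) - f S) := by
  induction T using Finset.induction_on with
  | empty => simp
  | @insert a T ha ih =>
    by_cases haS : a ∈ S
    · have h1 : S ∪ insert a T = S ∪ T := by
        rw [Finset.union_insert, Finset.insert_eq_self.mpr (Finset.mem_union_left _ haS)]
      have h2 : insert a T \ S = T \ S := Finset.insert_sdiff_of_mem _ haS
      rw [h1, h2]; exact ih
    · have h1 : S ∪ insert a T = insert a (S ∪ T) := Finset.union_insert _ _ _
      have h2 : insert a T \ S = insert a (T \ S) :=
        Finset.insert_sdiff_of_notMem _ haS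
      have haTS : a ∉ T \ S := by simp [ha]
      rw [h1, h2, Finset.sum_insert haTS]
      have hsub' := hsub (insert a S) (S ∪ T)
      have hunion : insert a S ∪ (S ∪ T) = insert a (S ∪ T) := by
        rw [Finset.insert_union, ← Finset.union_assoc, Finset.union_self]
      have hinter : S ⊆ insert a S ∩ (S ∪ T) := by
        intro x hx; simp [Finset.mem_inter, Finset.mem_insert, Finset.mem_union, hx]
      have hm := hmono _ _ hinter
      rw [hunion] at hsub'
      linarith

/-- `k` steps of the greedy algorithm for a normalized monotone submodular
function achieve a `1 - 1/e` fraction of the optimum over sets of cardinality at most `k`. -/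
theorem stmt_11 {W : Type*} [Fintype W] [DecidableEq W] (f : Finset W → ℝ)
    (hnn : ∀ A : Finset W, 0 ≤ f A) (hnorm : f ∅ = 0)
    (hmono : ∀ A B : Finset W, A ⊆ B → f A ≤ f B)
    (hsub : ∀ A B : Finset W, f A + f B ≥ f (A ∪ B) + f (A ∩ B))
    (k : ℕ) (hk : 1 ≤ k)
    (A : ℕ → Finset W) (hA0 : A 0 = ∅)
    (hstep : ∀ i < k, ∃ a ∉ A i, A (i + 1) = insert a (A i) ∧
      ∀ a' ∉ A i, f (insert a' (A i)) ≤ f (insert a (A i))) :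
    f (A k) ≥ (1 - 1 / Real.exp 1) *
      ((Finset.univ.powerset.filter (fun B : Finset W => B.card ≤ k)).sup' ⟨∅, by simp⟩ f) := by
  set P := Finset.univ.powerset.filter (fun B : Finset W => B.card ≤ k) with hP
  set OPT := P.sup' ⟨∅, by simp [hP]⟩ f with hOPT
  obtain ⟨B, hBmem, hBeq⟩ := Finset.exists_mem_eq_sup' (⟨∅, by simp [hP]⟩ : P.Nonempty) f
  have hBcard : B.card ≤ k := by
    have := hBmem; rw [hP, Finset.mem_filter] at this; exact this.2
  have hOPTB : OPT = f B := hBeq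
  have hOPTnn : 0 ≤ OPT := hOPTB ▸ hnn B
  have hkR : (0:ℝ) < (k:ℝ) := by positivity
  -- per step bound
  have key : ∀ i < k, OPT - f (A (i+1)) ≤ (1 - 1/(k:ℝ)) * (OPT - f (A i)) := by
    intro i hi
    obtain ⟨a, ha, hAi1, hmax⟩ := hstep i hi
    have hgain : 0 ≤ f (A (i+1)) - f (A i) := by
      have : A i ⊆ A (i+1) := by rw [hAi1]; exact Finset.subset_insert _ _
      linarith [hmono _ _ this]
    have h1 : f B ≤ f (A i ∪ B) := hmono _ _ Finset.subset_union_right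
    have h2 := submod_telescope f hmono hsub (A i) B
    have h3 : ∑ t ∈ B \ A i, (f (insert t (A i)) - f (A i))
        ≤ ∑ _t ∈ B \ A i, (f (A (i+1)) - f (A i)) := by
      apply Finset.sum_le_sum
      intro t ht
      have htA : t ∉ A i := (Finset.mem_sdiff.mp ht).2
      have := hmax t htA
      rw [hAi1]; linarith
    have h4 : ∑ _t ∈ B \ A i, (f (A (i+1)) - f (A i))
        = ((B \ A i).card : ℝ) * (f (A (i+1)) - f (A i)) := by
      rw [Finset.sum_const, nsmul_eq_mul]
    have hcard : ((B \ A i).card : ℝ) ≤ (k:ℝ) := by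
      have : (B \ A i).card ≤ B.card := Finset.card_le_card (Finset.sdiff_subset)
      exact_mod_cast le_trans this hBcard
    have h5 : ((B \ A i).card : ℝ) * (f (A (i+1)) - f (A i))
        ≤ (k:ℝ) * (f (A (i+1)) - f (A i)) := by
      exact mul_le_mul_of_nonneg_right hcard hgain
    have hmain : OPT ≤ f (A i) + (k:ℝ) * (f (A (i+1)) - f (A i)) := by
      rw [hOPTB]; linarith
    have hk1 : (1:ℝ) - 1/(k:ℝ) = ((k:ℝ) - 1)/(k:ℝ) := by field_simp
    rw [hk1, div_mul_eq_mul_div, le_div_iff₀ hkR]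
    nlinarith [hmain]
  -- decay
  have decay : ∀ i ≤ k, OPT - f (A i) ≤ (1 - 1/(k:ℝ))^i * OPT := by
    intro i
    induction i with
    | zero => intro _; simp [hA0, hnorm]
    | succ n ihn =>
      intro hn
      have hn' : n < k := Nat.lt_of_succ_le hn
      have h1 := key n hn'
      have h2 := ihn (Nat.le_of_lt hn')
      have hfac : (0:ℝ) ≤ 1 - 1/(k:ℝ) := by
        rw [sub_nonneg, div_le_one hkR]
        exact_mod_cast hk
      calc OPT - f (A (n+1)) ≤ (1 - 1/(k:ℝ)) * (OPT - f (A n)) := h1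
        _ ≤ (1 - 1/(k:ℝ)) * ((1 - 1/(k:ℝ))^n * OPT) := by
            exact mul_le_mul_of_nonneg_left h2 hfac
        _ = (1 - 1/(k:ℝ))^(n+1) * OPT := by ring
  have hfinal := decay k le_rfl
  -- (1 - 1/k)^k ≤ exp(-1)
  have hexp : (1 - 1/(k:ℝ))^k ≤ Real.exp (-1) := by
    have h1 : (1:ℝ) - 1/(k:ℝ) ≤ Real.exp (-(1/(k:ℝ))) := by
      have := Real.add_one_le_exp (-(1/(k:ℝ)))
      linarith
    have hfac : (0:ℝ) ≤ 1 - 1/(k:ℝ) := by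
      rw [sub_nonneg, div_le_one hkR]; exact_mod_cast hk
    calc (1 - 1/(k:ℝ))^k ≤ (Real.exp (-(1/(k:ℝ))))^k :=
          pow_le_pow_left₀ hfac h1 k
      _ = Real.exp (-(1/(k:ℝ)) * k) := by rw [← Real.exp_nat_mul]; ring_nf
      _ = Real.exp (-1) := by
          congr 1
          field_simp
  have h6 : (1 - 1/(k:ℝ))^k * OPT ≤ Real.exp (-1) * OPT :=
    mul_le_mul_of_nonneg_right hexp hOPTnn
  have h7 : Real.exp (-1) = 1 / Real.exp 1 := by
    rw [Real.exp_neg]; ring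
  rw [ge_iff_le]
  nlinarith [hfinal, h6, h7]
end
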